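/- For every 2-homogeneous polynomial P(x,y) = a·x² + b·xy + c·y² with real coefficients, √(a² + b² + c²) ≤ √2 · sup{|P(x,y)| : x⁴ + y⁴ ≤ 1}, and the constant √2 is optimal. Hence the 2-homogeneous Hardy–Littlewood constant on ℓ_4² equals √2: D_{ℝ,2,4}(2) = C_{ℝ,2,4}(2) = √2. -/

import Mathlib

/-- Sup norm of `a·x² + b·xy + c·y²` over the unit ball of `ℓ₄²`. -/
noncomputable def supNormFour (a b c : ℝ) : ℝ :=
  sSup {z : ℝ | ∃ x y : ℝ, x ^ 4 + y ^ 4 ≤ 1 ∧ z = |a * x ^ 2 + b * x * y + c * y ^ 2|}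

/-!
Write `u = x² - y²`, `v = 2xy`, i.e. `u + iv = (x + iy)²`. Then `x⁴ + y⁴ = u² + v²/2`,
`x² + y² = √(u² + v²)` and
`P(x, y) = (a - c)/2 · u + b/2 · v + (a + c)/2 · √(u² + v²)`,
and `(u, v)` ranges over all of `ℝ²`. Taking `(u, v) = ±((a - c)/2, b) / N` with
`N = √(((a - c)/2)² + b²/2)` puts the point on the unit sphere of `ℓ₄²` and gives
`‖P‖ ≥ N + |a + c|/2`, whose square is at least `(a² + b² + c²)/2`.
Equality holds for `P = x² - y²`.
-/

lemma bddAbove_supNormFour_set (a b c : ℝ) :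
    BddAbove
      {z : ℝ | ∃ x y : ℝ, x ^ 4 + y ^ 4 ≤ 1 ∧
        z = |a * x ^ 2 + b * x * y + c * y ^ 2|} := by
  refine ⟨|a| + |b| + |c|, ?_⟩
  rintro z ⟨x, y, hxy, rfl⟩
  have hx : x ^ 2 ≤ 1 := by nlinarith [sq_nonneg (x ^ 2), sq_nonneg (y ^ 2)]
  have hy : y ^ 2 ≤ 1 := by nlinarith [sq_nonneg (x ^ 2), sq_nonneg (y ^ 2)]
  have hxy : |x * y| ≤ 1 := by
    rw [abs_mul, ← sq_le_one_iff₀ (by positivity), mul_pow, sq_abs, sq_abs]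
    nlinarith [sq_nonneg x, sq_nonneg y]
  calc |a * x ^ 2 + b * x * y + c * y ^ 2|
      ≤ |a| * x ^ 2 + |b| * |x * y| + |c| * y ^ 2 := by
        rw [mul_assoc b]
        refine (abs_add_le _ _).trans (add_le_add ((abs_add_le _ _).trans_eq ?_) ?_)
        · rw [abs_mul, abs_mul, abs_of_nonneg (sq_nonneg x)]
        · rw [abs_mul, abs_of_nonneg (sq_nonneg y)]
    _ ≤ |a| + |b| + |c| := by
        gcongr <;> first | assumption | exact mul_le_of_le_one_right (abs_nonneg _) ‹_›

lemma abs_le_supNormFour (a b c : ℝ) {x y : ℝ} (h : x ^ 4 + y ^ 4 ≤ 1) :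
    |a * x ^ 2 + b * x * y + c * y ^ 2| ≤ supNormFour a b c :=
  le_csSup (bddAbove_supNormFour_set a b c) ⟨x, y, h, rfl⟩

lemma supNormFour_nonneg (a b c : ℝ) : 0 ≤ supNormFour a b c :=
  (abs_nonneg _).trans (abs_le_supNormFour a b c (x := 0) (y := 0) (by norm_num))

lemma supNormFour_le {a b c M : ℝ}
    (h : ∀ x y : ℝ, x ^ 4 + y ^ 4 ≤ 1 → |a * x ^ 2 + b * x * y + c * y ^ 2| ≤ M) :
    supNormFour a b c ≤ M :=
  csSup_le ⟨_, 0, 0, by norm_num, rfl⟩ (by rintro z ⟨x, y, hxy, rfl⟩; exact h x y hxy)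

lemma exists_sq_sub_sq_eq_and_two_mul_eq (u v : ℝ) :
    ∃ x y : ℝ, x ^ 2 - y ^ 2 = u ∧ 2 * x * y = v := by
  obtain ⟨w, hw⟩ := Complex.isSquare ⟨u, v⟩
  refine ⟨w.re, w.im, ?_, ?_⟩
  · simpa [sq] using (congrArg Complex.re hw).symm
  · have him := (congrArg Complex.im hw).symm
    simp only [Complex.mul_im] at him
    linarith

lemma abs_le_supNormFour_of_sq_add_sq_div_two_le (a b c : ℝ) {u v : ℝ}
    (h : u ^ 2 + v ^ 2 / 2 ≤ 1) :
    |(a - c) / 2 * u + b / 2 * v + (a + c) / 2 * √(u ^ 2 + v ^ 2)| ≤ supNormFour a b c := by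
  obtain ⟨x, y, rfl, rfl⟩ := exists_sq_sub_sq_eq_and_two_mul_eq u v
  have hnorm : √((x ^ 2 - y ^ 2) ^ 2 + (2 * x * y) ^ 2) = x ^ 2 + y ^ 2 := by
    rw [show (x ^ 2 - y ^ 2) ^ 2 + (2 * x * y) ^ 2 = (x ^ 2 + y ^ 2) ^ 2 by ring]
    exact Real.sqrt_sq (by positivity)
  have hball : x ^ 4 + y ^ 4 ≤ 1 := by linarith
  rw [hnorm]
  convert abs_le_supNormFour a b c hball using 2
  ring

lemma add_abs_le_supNormFour {a b c N : ℝ} (hN0 : 0 ≤ N)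
    (hN : N ^ 2 = ((a - c) / 2) ^ 2 + b ^ 2 / 2) :
    N + |(a + c) / 2| ≤ supNormFour a b c := by
  rcases hN0.eq_or_lt with rfl | hNpos
  · have hac : a = c := by nlinarith [sq_nonneg (a - c), sq_nonneg b]
    subst hac
    simpa [← two_mul] using abs_le_supNormFour a b a (x := 1) (y := 0) (by norm_num)
  · have hsphere : ((a - c) / 2 / N) ^ 2 + (b / N) ^ 2 / 2 = 1 := by
      field_simp
      linarith
    have hρ : 1 ≤ √(((a - c) / 2 / N) ^ 2 + (b / N) ^ 2) := by
      rw [Real.one_le_sqrt]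
      nlinarith [sq_nonneg (b / N)]
    have hlin : (a - c) / 2 * ((a - c) / 2 / N) + b / 2 * (b / N) = N := by
      field_simp
      linarith
    have hplus := abs_le_supNormFour_of_sq_add_sq_div_two_le a b c hsphere.le
    have hminus := abs_le_supNormFour_of_sq_add_sq_div_two_le a b c
      (u := -((a - c) / 2 / N)) (v := -(b / N)) (by rw [neg_sq, neg_sq]; exact hsphere.le)
    rw [hlin] at hplus
    rw [neg_sq, neg_sq, mul_neg, mul_neg, ← neg_add, hlin] at hminus
    set ρ := √(((a - c) / 2 / N) ^ 2 + (b / N) ^ 2)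
    -- the sign `±` is chosen so that `±N` and `(a + c)/2 · ρ` do not cancel
    rcases abs_cases ((a + c) / 2) with ⟨hE, hE0⟩ | ⟨hE, hE0⟩
    · nlinarith [le_abs_self (N + (a + c) / 2 * ρ), mul_le_mul_of_nonneg_left hρ hE0]
    · nlinarith [neg_abs_le (-N + (a + c) / 2 * ρ),
        mul_le_mul_of_nonneg_left hρ (neg_nonneg.2 hE0.le)]

lemma sq_add_sq_add_sq_le_two_mul_supNormFour_sq (a b c : ℝ) :
    a ^ 2 + b ^ 2 + c ^ 2 ≤ 2 * supNormFour a b c ^ 2 := by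
  have hN0 := Real.sqrt_nonneg (((a - c) / 2) ^ 2 + b ^ 2 / 2)
  have hN := Real.sq_sqrt (show 0 ≤ ((a - c) / 2) ^ 2 + b ^ 2 / 2 by positivity)
  have h := add_abs_le_supNormFour hN0 hN
  have hpos := add_nonneg hN0 (abs_nonneg ((a + c) / 2))
  nlinarith [sq_abs ((a + c) / 2), mul_nonneg hN0 (abs_nonneg ((a + c) / 2)),
    mul_le_mul h h hpos (hpos.trans h)]

lemma supNormFour_one_zero_neg_one : supNormFour 1 0 (-1) = 1 := by
  refine le_antisymm (supNormFour_le fun x y hxy ↦ ?_) ?_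
  · rw [abs_le]
    constructor <;> nlinarith [sq_nonneg (x ^ 2 - y ^ 2), sq_nonneg (x * y)]
  · simpa using abs_le_supNormFour 1 0 (-1) (x := 1) (y := 0) (by norm_num)

theorem stmt12 :
    (∀ a b c : ℝ, Real.sqrt (a ^ 2 + b ^ 2 + c ^ 2) ≤ Real.sqrt 2 * supNormFour a b c) ∧
    (∃ a b c : ℝ, supNormFour a b c = 1 ∧
      Real.sqrt (a ^ 2 + b ^ 2 + c ^ 2) = Real.sqrt 2 * supNormFour a b c) := by
  refine ⟨fun a b c ↦ ?_, 1, 0, -1, supNormFour_one_zero_neg_one, ?_⟩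
  · calc √(a ^ 2 + b ^ 2 + c ^ 2) ≤ √(2 * supNormFour a b c ^ 2) :=
          Real.sqrt_le_sqrt (sq_add_sq_add_sq_le_two_mul_supNormFour_sq a b c)
      _ = √2 * supNormFour a b c := by
          rw [Real.sqrt_mul zero_le_two, Real.sqrt_sq (supNormFour_nonneg a b c)]
  · rw [supNormFour_one_zero_neg_one]
    norm_num
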